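/- arXiv:1606.05779 — 2 statements merged into one kernel-verified Lean document; each statement's English description precedes it below -/
import Mathlib

section
/- Let S₀, S₁ ≤ N be real numbers ≥ 1 and d₀, d₁ positive integers. Define A(S₀,S₁,d₀,d₁) as the set of integers s = s₀·s₁ with gcd(s₀,s₁)=1, s₀ squarefull with S₀ < s₀ ≤ 2S₀ and d₀ ∣ s₀, and s₁ squarefree with S₁ < s₁ ≤ 2S₁ and d₁ ∣ s₁. Then #A(S₀,S₁,d₀,d₁) ≪ N^η · S₀^{1/2} · S₁ · d₀^{-1/2} · d₁^{-1}, where the implied constant depends only on η > 0. -/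
open Finset
open scoped Classical

/-- An integer is squarefull if every prime dividing it has its square dividing it. -/
def Squarefull (n : ℕ) : Prop := ∀ p : ℕ, p.Prime → p ∣ n → p ^ 2 ∣ n

/-!
Drop the coprimality condition and the lower bounds: the set lies in a product, and the
multiples of `d₁` up to `2S₁` number at most `2S₁/d₁`. A squarefull `n ≤ X` divisible by
`d` splits as `n = d u v`, where `d u = gcd(n, d^n)` is the `d`-part of `n` and `v` is
squarefull and coprime to it. Squarefull numbers have the form `a³ j²`, so at most
`ζ(3/2) √Y` of them are `≤ Y`; hence the count is at most
`ζ(3/2) √(X/d) ∑_{u ∣ d^∞} u^{-1/2} ≤ ζ(3/2) √(X/d) 4^ω(d)`, by an Euler product over the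
primes of `d`. Finally `4^ω(d) ≪_η d^η ≤ X^η`, since only boundedly many primes are
smaller than `4^{1/η}`.
-/

open Real ArithmeticFunction
open scoped ArithmeticFunction.zeta

namespace Squarefull

lemma of_mul_right {a b : ℕ} (h : Squarefull (a * b)) (hab : Nat.Coprime a b) :
    Squarefull b := by
  intro p hp hpb
  have hpa : ¬ p ∣ a := fun hpa => hp.ne_one (Nat.eq_one_of_dvd_coprimes hab hpa hpb)
  exact (((hp.coprime_iff_not_dvd).2 hpa).pow_left 2).dvd_of_dvd_mul_left
    (h p hp (dvd_mul_of_dvd_right hpb a))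

lemma exists_pow_three_mul_sq_eq {n : ℕ} (hn : n ≠ 0) (h : Squarefull n) :
    ∃ a j : ℕ, a ^ 3 * j ^ 2 = n := by
  obtain ⟨a, k, rfl, ha⟩ := Nat.sq_mul_squarefree n
  have hk : k ≠ 0 := by rintro rfl; simp at hn
  have hak : a ∣ k := by
    rw [← Nat.prod_primeFactors_of_squarefree ha, Nat.prod_primeFactors_dvd_iff hk]
    intro p hp
    have hpp := Nat.prime_of_mem_primeFactors hp
    refine Nat.mem_primeFactors.2 ⟨hpp, ?_, hk⟩
    by_contra hpk
    have hp2 : p ^ 2 ∣ a :=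
      (((hpp.coprime_iff_not_dvd).2 hpk).pow 2 2).dvd_of_dvd_mul_left
        (h p hpp (dvd_mul_of_dvd_right (Nat.dvd_of_mem_primeFactors hp) _))
    exact hpp.one_lt.ne' (Nat.isUnit_iff.1 (ha p (by rwa [← sq])))
  obtain ⟨j, rfl⟩ := hak
  exact ⟨a, j, by ring⟩

end Squarefull

/-- `n.gcd (d ^ n)` is the `d`-part of `n`, as no exponent in `n` reaches `n`. -/
lemma Nat.coprime_div_gcd_pow_self {n : ℕ} (hn : n ≠ 0) (d : ℕ) :
    Nat.Coprime (n / n.gcd (d ^ n)) d := by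
  refine Nat.coprime_of_dvd fun p hp hpn hpd => ?_
  have hv : p ^ n.factorization p ∣ n.gcd (d ^ n) :=
    Nat.dvd_gcd (Nat.ordProj_dvd n p)
      ((pow_dvd_pow p (Nat.factorization_lt p hn).le).trans (pow_dvd_pow_of_dvd hpd n))
  refine Nat.pow_succ_factorization_not_dvd hn hp ?_
  calc p ^ (n.factorization p + 1) = p ^ n.factorization p * p := pow_succ _ _
    _ ∣ n.gcd (d ^ n) * (n / n.gcd (d ^ n)) := mul_dvd_mul hv hpn
    _ = n := Nat.mul_div_cancel' (Nat.gcd_dvd_left n _)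

lemma Squarefull.exists_mul_mul_eq {n d : ℕ} (hn : n ≠ 0) (h : Squarefull n) (hd : d ∣ n) :
    ∃ u v : ℕ, u ∣ d ^ n ∧ Squarefull v ∧ d * u * v = n := by
  set g := n.gcd (d ^ n)
  have hdg : d ∣ g := Nat.dvd_gcd hd (dvd_pow_self d hn)
  have hgn : g * (n / g) = n := Nat.mul_div_cancel' (Nat.gcd_dvd_left n _)
  have hcop : Nat.Coprime g (n / g) :=
    (((Nat.coprime_div_gcd_pow_self hn d).pow_right n).coprime_dvd_right
      (Nat.gcd_dvd_right n _)).symm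
  refine ⟨g / d, n / g, (Nat.div_dvd_of_dvd hdg).trans (Nat.gcd_dvd_right n _),
    (hgn ▸ h).of_mul_right hcop, ?_⟩
  rw [Nat.mul_div_cancel' hdg, hgn]

lemma Real.sqrt_natCast_pow_three (a : ℕ) : √((a : ℝ) ^ 3) = (a : ℝ) ^ (3 / 2 : ℝ) := by
  rw [sqrt_eq_rpow, ← rpow_natCast, ← rpow_mul (Nat.cast_nonneg a)]
  norm_num

lemma card_filter_squarefull_Icc_le (Y : ℕ) :
    (#{n ∈ Icc 1 Y | Squarefull n} : ℝ) ≤ (∑' a : ℕ, ((a : ℝ) ^ (3 / 2 : ℝ))⁻¹) * √Y := by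
  have hsub : {n ∈ Icc 1 Y | Squarefull n} ⊆
      (Icc 1 Y).biUnion fun a => (Icc 1 (Nat.sqrt (Y / a ^ 3))).image fun j => a ^ 3 * j ^ 2 := by
    intro n hn
    simp only [mem_filter, mem_Icc] at hn
    obtain ⟨⟨hn1, hnY⟩, hsf⟩ := hn
    obtain ⟨a, j, rfl⟩ := hsf.exists_pow_three_mul_sq_eq (by omega)
    have ha : 0 < a := Nat.pos_of_ne_zero (by rintro rfl; simp at hn1)
    have hj : 0 < j := Nat.pos_of_ne_zero (by rintro rfl; simp at hn1)
    simp only [mem_biUnion, mem_image, mem_Icc]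
    refine ⟨a, ⟨ha, ?_⟩, j, ⟨hj, Nat.le_sqrt'.2 ?_⟩, rfl⟩
    · calc a ≤ a ^ 3 := Nat.le_self_pow (by norm_num) a
        _ ≤ a ^ 3 * j ^ 2 := Nat.le_mul_of_pos_right _ (by positivity)
        _ ≤ Y := hnY
    · rw [Nat.le_div_iff_mul_le (by positivity), mul_comm]
      exact hnY
  have hcard : #{n ∈ Icc 1 Y | Squarefull n} ≤ ∑ a ∈ Icc 1 Y, Nat.sqrt (Y / a ^ 3) :=
    (card_le_card hsub).trans <| card_biUnion_le.trans <|
      sum_le_sum fun a _ => card_image_le.trans (by simp)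
  have hterm (a : ℕ) : (Nat.sqrt (Y / a ^ 3) : ℝ) ≤ √Y * ((a : ℝ) ^ (3 / 2 : ℝ))⁻¹ :=
    calc (Nat.sqrt (Y / a ^ 3) : ℝ) ≤ √((Y / a ^ 3 : ℕ) : ℝ) := nat_sqrt_le_real_sqrt
      _ ≤ √((Y : ℝ) / (a : ℝ) ^ 3) := sqrt_le_sqrt (by exact_mod_cast Nat.cast_div_le)
      _ = √Y * ((a : ℝ) ^ (3 / 2 : ℝ))⁻¹ := by
        rw [sqrt_div' _ (by positivity), sqrt_natCast_pow_three, div_eq_mul_inv]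
  calc (#{n ∈ Icc 1 Y | Squarefull n} : ℝ)
      ≤ ∑ a ∈ Icc 1 Y, (Nat.sqrt (Y / a ^ 3) : ℝ) := by exact_mod_cast hcard
    _ ≤ ∑ a ∈ Icc 1 Y, √Y * ((a : ℝ) ^ (3 / 2 : ℝ))⁻¹ := sum_le_sum fun a _ => hterm a
    _ ≤ √Y * ∑' a : ℕ, ((a : ℝ) ^ (3 / 2 : ℝ))⁻¹ := by
      rw [← mul_sum]
      exact mul_le_mul_of_nonneg_left ((summable_nat_rpow_inv.2 (by norm_num)).sum_le_tsum _
        fun _ _ => by positivity) (sqrt_nonneg _)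
    _ = _ := mul_comm _ _

lemma Real.sqrt_pow {x : ℝ} (hx : 0 ≤ x) (k : ℕ) : √(x ^ k) = √x ^ k := by
  rw [show x ^ k = (√x ^ k) ^ 2 by rw [← pow_mul, mul_comm, pow_mul, sq_sqrt hx]]
  exact sqrt_sq (by positivity)

lemma geom_sum_le_four {r : ℝ} (h0 : 0 ≤ r) (h1 : r ≤ 3 / 4) (n : ℕ) :
    ∑ i ∈ range n, r ^ i ≤ 4 := by
  rw [range_eq_Ico]
  refine (geom_sum_Ico_le_of_lt_one h0 (by linarith)).trans ?_
  rw [pow_zero, div_le_iff₀ (by linarith)]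
  linarith

lemma inv_sqrt_prime_le {p : ℕ} (hp : p.Prime) : (√(p : ℝ))⁻¹ ≤ 3 / 4 := by
  have h2 : (2 : ℝ) ≤ p := by exact_mod_cast hp.two_le
  have : (4 / 3 : ℝ) ≤ √(p : ℝ) := (le_sqrt (by norm_num) (by linarith)).2 (by nlinarith)
  rw [inv_le_comm₀ (by linarith) (by norm_num)]
  linarith

-- `(√0)⁻¹ = 0`, as an arithmetic function requires.
noncomputable def invSqrt : ArithmeticFunction ℝ := ⟨fun n => (√(n : ℝ))⁻¹, by simp⟩

lemma invSqrt_apply (n : ℕ) : invSqrt n = (√(n : ℝ))⁻¹ := rfl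

lemma isMultiplicative_invSqrt : invSqrt.IsMultiplicative := by
  refine IsMultiplicative.iff_ne_zero.2 ⟨by simp [invSqrt_apply], fun {m n} _ _ _ => ?_⟩
  simp only [invSqrt_apply, Nat.cast_mul, sqrt_mul (Nat.cast_nonneg m), mul_inv]

lemma sum_divisors_inv_sqrt_le {n : ℕ} (hn : n ≠ 0) :
    ∑ u ∈ n.divisors, (√(u : ℝ))⁻¹ ≤ 4 ^ #n.primeFactors := by
  have hmul := isMultiplicative_invSqrt.mul isMultiplicative_zeta.natCast (R := ℝ)
  have hprime {p : ℕ} (hp : p.Prime) (k : ℕ) : (invSqrt * ζ) (p ^ k) ≤ 4 := by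
    rw [coe_mul_zeta_apply, Nat.sum_divisors_prime_pow hp]
    simp only [invSqrt_apply, Nat.cast_pow, sqrt_pow (Nat.cast_nonneg p), ← inv_pow]
    exact geom_sum_le_four (by positivity) (inv_sqrt_prime_le hp) _
  calc ∑ u ∈ n.divisors, (√(u : ℝ))⁻¹ = (invSqrt * ζ) n :=
        (coe_mul_zeta_apply (f := invSqrt)).symm
    _ = ∏ p ∈ n.primeFactors, (invSqrt * ζ) (p ^ n.factorization p) := by
      refine (IsMultiplicative.multiplicative_factorization _ hmul hn).trans ?_
      rw [Finsupp.prod, Nat.support_factorization]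
    _ ≤ ∏ _p ∈ n.primeFactors, (4 : ℝ) :=
      prod_le_prod (fun p _ => by
          rw [coe_mul_zeta_apply]; exact sum_nonneg fun _ _ => inv_nonneg.2 (sqrt_nonneg _))
        fun p hp => hprime (Nat.prime_of_mem_primeFactors hp) _
    _ = 4 ^ #n.primeFactors := prod_const 4

lemma exists_pow_card_primeFactors_le {c : ℝ} (hc : 1 ≤ c) {η : ℝ} (hη : 0 < η) :
    ∃ C : ℝ, 0 < C ∧ ∀ d : ℕ, d ≠ 0 → c ^ #d.primeFactors ≤ C * (d : ℝ) ^ η := by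
  set B := ⌈c ^ η⁻¹⌉₊
  refine ⟨c ^ B, by positivity, fun d hd => ?_⟩
  have hsmall : c ^ #{p ∈ d.primeFactors | p ≤ B} ≤ c ^ B := by
    refine pow_le_pow_right₀ hc ((card_le_card fun p hp => ?_).trans_eq (Nat.card_Icc 1 B))
    simp only [mem_filter, Nat.mem_primeFactors] at hp
    exact mem_Icc.2 ⟨hp.1.1.one_lt.le, hp.2⟩
  have hbig : c ^ #{p ∈ d.primeFactors | ¬p ≤ B} ≤ (d : ℝ) ^ η := by
    have hle : ∀ p ∈ {p ∈ d.primeFactors | ¬p ≤ B}, c ≤ (p : ℝ) ^ η := by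
      intro p hp
      have hBp : c ^ η⁻¹ ≤ p :=
        (Nat.le_ceil _).trans (by exact_mod_cast (not_le.1 (mem_filter.1 hp).2).le)
      calc c = (c ^ η⁻¹) ^ η := by rw [← rpow_mul (by linarith), inv_mul_cancel₀ hη.ne', rpow_one]
        _ ≤ (p : ℝ) ^ η := rpow_le_rpow (by positivity) hBp hη.le
    calc c ^ #{p ∈ d.primeFactors | ¬p ≤ B} = ∏ _p ∈ {p ∈ d.primeFactors | ¬p ≤ B}, c :=
          (prod_const c).symm
      _ ≤ ∏ p ∈ {p ∈ d.primeFactors | ¬p ≤ B}, (p : ℝ) ^ η :=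
          prod_le_prod (fun _ _ => by linarith) hle
      _ = ((∏ p ∈ {p ∈ d.primeFactors | ¬p ≤ B}, p : ℕ) : ℝ) ^ η := by
          rw [Nat.cast_prod, finsetProd_rpow _ _ fun _ _ => Nat.cast_nonneg _]
      _ ≤ (d : ℝ) ^ η := by
          refine rpow_le_rpow (Nat.cast_nonneg _) ?_ hη.le
          exact_mod_cast Nat.le_of_dvd (Nat.pos_of_ne_zero hd)
            ((prod_dvd_prod_of_subset _ _ _ (filter_subset _ _)).trans d.prod_primeFactors_dvd)
  rw [← card_filter_add_card_filter_not (· ≤ B), pow_add]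
  exact mul_le_mul hsmall hbig (by positivity) (by positivity)

lemma card_filter_squarefull_dvd_le (X : ℕ) {d : ℕ} (hd : d ≠ 0) :
    (#{n ∈ Icc 1 X | Squarefull n ∧ d ∣ n} : ℝ) ≤
      (∑' a : ℕ, ((a : ℝ) ^ (3 / 2 : ℝ))⁻¹) * √X * (√d)⁻¹ * 4 ^ #d.primeFactors := by
  set Z := ∑' a : ℕ, ((a : ℝ) ^ (3 / 2 : ℝ))⁻¹
  rcases Nat.eq_zero_or_pos X with rfl | hX
  · simp
  have hsub : {n ∈ Icc 1 X | Squarefull n ∧ d ∣ n} ⊆ (d ^ X).divisors.biUnion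
      fun u => {v ∈ Icc 1 (X / (d * u)) | Squarefull v}.image (d * u * ·) := by
    intro n hn
    simp only [mem_filter, mem_Icc] at hn
    obtain ⟨⟨hn1, hnX⟩, hsf, hdn⟩ := hn
    obtain ⟨u, v, hu, hv, rfl⟩ := hsf.exists_mul_mul_eq (by omega) hdn
    have hdu : 0 < d * u := Nat.pos_of_ne_zero (by rintro h; simp [h] at hn1)
    have hv0 : 0 < v := Nat.pos_of_ne_zero (by rintro rfl; simp at hn1)
    simp only [mem_biUnion, mem_image, mem_filter, mem_Icc, Nat.mem_divisors]
    refine ⟨u, ⟨hu.trans (pow_dvd_pow d hnX), pow_ne_zero _ hd⟩, v, ⟨⟨hv0, ?_⟩, hv⟩, rfl⟩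
    rwa [Nat.le_div_iff_mul_le hdu, mul_comm]
  have hterm (u : ℕ) :
      (#{v ∈ Icc 1 (X / (d * u)) | Squarefull v} : ℝ) ≤ Z * √X * (√d)⁻¹ * (√u)⁻¹ :=
    calc (#{v ∈ Icc 1 (X / (d * u)) | Squarefull v} : ℝ) ≤ Z * √((X / (d * u) : ℕ) : ℝ) :=
          card_filter_squarefull_Icc_le _
      _ ≤ Z * √((X : ℝ) / (d * u)) := by
          gcongr
          exact_mod_cast Nat.cast_div_le
      _ = Z * √X * (√d)⁻¹ * (√u)⁻¹ := by
          rw [sqrt_div' _ (by positivity), sqrt_mul (Nat.cast_nonneg d)]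
          ring
  calc (#{n ∈ Icc 1 X | Squarefull n ∧ d ∣ n} : ℝ)
      ≤ ∑ u ∈ (d ^ X).divisors, (#{v ∈ Icc 1 (X / (d * u)) | Squarefull v} : ℝ) := by
        exact_mod_cast (card_le_card hsub).trans
          (card_biUnion_le.trans (sum_le_sum fun u _ => card_image_le))
    _ ≤ ∑ u ∈ (d ^ X).divisors, Z * √X * (√d)⁻¹ * (√u)⁻¹ := sum_le_sum fun u _ => hterm u
    _ = Z * √X * (√d)⁻¹ * ∑ u ∈ (d ^ X).divisors, (√u)⁻¹ := (mul_sum _ _ _).symm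
    _ ≤ Z * √X * (√d)⁻¹ * 4 ^ #d.primeFactors := by
        rw [← Nat.primeFactors_pow d hX.ne']
        gcongr
        exact sum_divisors_inv_sqrt_le (pow_ne_zero X hd)

lemma one_le_tsum_inv_rpow_three_halves : 1 ≤ ∑' a : ℕ, ((a : ℝ) ^ (3 / 2 : ℝ))⁻¹ := by
  simpa using (summable_nat_rpow_inv.2 (by norm_num : (1 : ℝ) < 3 / 2)).le_tsum 1
    fun _ _ => by positivity

lemma exists_card_filter_squarefull_dvd_le {η : ℝ} (hη : 0 < η) :
    ∃ C : ℝ, 0 < C ∧ ∀ X d : ℕ, d ≠ 0 →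
      (#{n ∈ Icc 1 X | Squarefull n ∧ d ∣ n} : ℝ) ≤ C * (X : ℝ) ^ η * √X * (√d)⁻¹ := by
  obtain ⟨C, hC, hω⟩ := exists_pow_card_primeFactors_le (by norm_num : (1 : ℝ) ≤ 4) hη
  set Z := ∑' a : ℕ, ((a : ℝ) ^ (3 / 2 : ℝ))⁻¹
  have hZ : 0 < Z := one_pos.trans_le one_le_tsum_inv_rpow_three_halves
  refine ⟨Z * C, by positivity, fun X d hd => ?_⟩
  rcases eq_empty_or_nonempty {n ∈ Icc 1 X | Squarefull n ∧ d ∣ n} with hempty | ⟨n, hn⟩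
  · rw [hempty, card_empty, Nat.cast_zero]
    positivity
  simp only [mem_filter, mem_Icc] at hn
  have hdX : (d : ℝ) ≤ X := by exact_mod_cast (Nat.le_of_dvd (by omega) hn.2.2).trans hn.1.2
  calc (#{n ∈ Icc 1 X | Squarefull n ∧ d ∣ n} : ℝ)
      ≤ Z * √X * (√d)⁻¹ * 4 ^ #d.primeFactors := card_filter_squarefull_dvd_le X hd
    _ ≤ Z * √X * (√d)⁻¹ * (C * (X : ℝ) ^ η) := by
        gcongr
        exact (hω d hd).trans (by gcongr)
    _ = Z * C * (X : ℝ) ^ η * √X * (√d)⁻¹ := by ring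

lemma card_filter_dvd_Icc (X d : ℕ) : #{k ∈ Icc 1 X | d ∣ k} = X / d := by
  rw [← Nat.Ioc_filter_dvd_card_eq_div]
  rfl

theorem stmt_8 (η : ℝ) (hη : 0 < η) :
    ∃ C : ℝ, 0 < C ∧
      ∀ (N S₀ S₁ : ℝ) (d₀ d₁ : ℕ),
        1 ≤ S₀ → 1 ≤ S₁ → S₀ ≤ N → S₁ ≤ N → 0 < d₀ → 0 < d₁ →
        ((((Finset.Icc 1 ⌊2 * S₀⌋₊ ×ˢ Finset.Icc 1 ⌊2 * S₁⌋₊).filter fun p =>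
            S₀ < (p.1 : ℝ) ∧ (p.1 : ℝ) ≤ 2 * S₀ ∧ Squarefull p.1 ∧ d₀ ∣ p.1 ∧
            S₁ < (p.2 : ℝ) ∧ (p.2 : ℝ) ≤ 2 * S₁ ∧ Squarefree p.2 ∧ d₁ ∣ p.2 ∧
            Nat.gcd p.1 p.2 = 1).card : ℝ)
          ≤ C * N ^ η * S₀ ^ ((1 : ℝ) / 2) * S₁ * (d₀ : ℝ) ^ (-(1 : ℝ) / 2) * (d₁ : ℝ)⁻¹) := by
  obtain ⟨C, hC, hsq⟩ := exists_card_filter_squarefull_dvd_le hη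
  refine ⟨2 * √2 * 2 ^ η * C, by positivity, fun N S₀ S₁ d₀ d₁ hS₀ hS₁ hS₀N _ hd₀ _ => ?_⟩
  rw [← sqrt_eq_rpow, neg_div, rpow_neg (Nat.cast_nonneg d₀), ← sqrt_eq_rpow]
  have hN : 0 < N := by linarith
  have hS₁' : 0 < S₁ := by linarith
  set X₀ := ⌊2 * S₀⌋₊
  set X₁ := ⌊2 * S₁⌋₊
  have hX₀ : (X₀ : ℝ) ≤ 2 * S₀ := Nat.floor_le (by positivity)
  have hX₁ : (X₁ : ℝ) ≤ 2 * S₁ := Nat.floor_le (by positivity)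
  have hF₀ : (#{n ∈ Icc 1 X₀ | Squarefull n ∧ d₀ ∣ n} : ℝ) ≤
      C * (2 * N) ^ η * (√2 * √S₀) * (√d₀)⁻¹ :=
    calc _ ≤ C * (X₀ : ℝ) ^ η * √X₀ * (√d₀)⁻¹ := hsq X₀ d₀ hd₀.ne'
      _ ≤ C * (2 * N) ^ η * (√2 * √S₀) * (√d₀)⁻¹ := by
        rw [← sqrt_mul zero_le_two]
        gcongr
        linarith
  have hF₁ : (#{k ∈ Icc 1 X₁ | d₁ ∣ k} : ℝ) ≤ 2 * S₁ * (d₁ : ℝ)⁻¹ := by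
    rw [card_filter_dvd_Icc, ← div_eq_mul_inv]
    exact Nat.cast_div_le.trans (by gcongr)
  have hsub : ((Icc 1 X₀ ×ˢ Icc 1 X₁).filter fun p =>
      S₀ < (p.1 : ℝ) ∧ (p.1 : ℝ) ≤ 2 * S₀ ∧ Squarefull p.1 ∧ d₀ ∣ p.1 ∧
      S₁ < (p.2 : ℝ) ∧ (p.2 : ℝ) ≤ 2 * S₁ ∧ Squarefree p.2 ∧ d₁ ∣ p.2 ∧ Nat.gcd p.1 p.2 = 1) ⊆
      {n ∈ Icc 1 X₀ | Squarefull n ∧ d₀ ∣ n} ×ˢ {k ∈ Icc 1 X₁ | d₁ ∣ k} := by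
    intro p hp
    simp only [mem_filter, mem_product] at hp ⊢
    tauto
  calc _ ≤ (#{n ∈ Icc 1 X₀ | Squarefull n ∧ d₀ ∣ n} : ℝ) * #{k ∈ Icc 1 X₁ | d₁ ∣ k} := by
        exact_mod_cast (card_le_card hsub).trans_eq (card_product _ _)
    _ ≤ (C * (2 * N) ^ η * (√2 * √S₀) * (√d₀)⁻¹) * (2 * S₁ * (d₁ : ℝ)⁻¹) :=
        mul_le_mul hF₀ hF₁ (Nat.cast_nonneg _) (by positivity)
    _ = 2 * √2 * 2 ^ η * C * N ^ η * √S₀ * S₁ * (√d₀)⁻¹ * (d₁ : ℝ)⁻¹ := by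
        rw [mul_rpow zero_le_two (by linarith)]
        ring
end

section
/- Let q ≥ 2, W, X, Y positive integers greater than 1, and a an integer coprime to q. Then the number of pairs (y₁, y₂) with y₁ ≠ y₂, Y ≤ y₁, y₂ < 2Y, such that min over s ≤ W of ‖a·(y₁² − y₂²)·s/q‖ < 1/X, is ≪ (W·Y²/q + 1)·(1 + q/X)·(W·Y)^η for every η > 0. -/
open Finset
open scoped Classical

/-- Distance from a real number to the nearest integer. -/
noncomputable def ndist (x : ℝ) : ℝ := |x - round x|

/-!
A counted pair `(y₁, y₂)` with multiplier `s` produces the nonzero integer `t = (y₁² - y₂²) s`,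
with `|t| ≤ 4WY²` and `‖a t / q‖ < 1 / X`. As `a` is invertible modulo `q`, such a `t` is determined
by its block of length `q` together with the residue of `a t` nearest to `0` modulo `q`, which has
size at most `q / X`; hence there are `≪ (WY²/q + 1)(1 + q/X)` of them. Conversely `t` determines
the pair through the divisors `y₁ - y₂` and `y₁ + y₂` of `t`, so at most `d(|t|)²` pairs belong to
it, and the divisor bound `d(n) ≪_ε n^ε` finishes the proof.
-/

lemma add_one_le_pow_of_two_le {b : ℝ} (hb : 2 ≤ b) (k : ℕ) : (k + 1 : ℝ) ≤ b ^ k := by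
  have := one_add_mul_le_pow (a := b - 1) (by linarith) k
  rw [add_sub_cancel] at this
  nlinarith [(k.cast_nonneg : (0 : ℝ) ≤ k)]

lemma add_one_le_mul_pow {c b : ℝ} (hc : 1 < c) (hcb : c ≤ b) (k : ℕ) :
    (k + 1 : ℝ) ≤ c / (c - 1) * b ^ k := by
  have hbern := one_add_mul_le_pow (a := c - 1) (by linarith) k
  rw [add_sub_cancel] at hbern
  have hck : c ^ k ≤ b ^ k := pow_le_pow_left₀ (by linarith) hcb k
  have hc1 : 0 < c - 1 := by linarith
  calc (k + 1 : ℝ) ≤ c / (c - 1) * (1 + k * (c - 1)) := by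
        rw [div_mul_eq_mul_div, le_div_iff₀ hc1]
        nlinarith [mul_nonneg (k.cast_nonneg : (0 : ℝ) ≤ k) (sq_nonneg (c - 1))]
    _ ≤ c / (c - 1) * b ^ k := by gcongr; linarith

lemma add_one_le_mul_rpow_pow {ε : ℝ} (hε : 0 < ε) {p : ℕ} (hp : 2 ≤ p) (k : ℕ) :
    (k + 1 : ℝ) ≤
      (if p < ⌈(2 : ℝ) ^ ε⁻¹⌉₊ then 2 ^ ε / (2 ^ ε - 1) else 1) * ((p : ℝ) ^ k) ^ ε := by
  rw [← Real.rpow_pow_comm (Nat.cast_nonneg p)]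
  split_ifs with hpB
  · refine add_one_le_mul_pow (Real.one_lt_rpow (by norm_num) hε) ?_ k
    exact Real.rpow_le_rpow (by norm_num) (by exact_mod_cast hp) hε.le
  · rw [one_mul]
    refine add_one_le_pow_of_two_le ?_ k
    rw [← Real.rpow_inv_le_iff_of_pos (by norm_num) (Nat.cast_nonneg p) hε]
    exact (Nat.ceil_le.mp (not_lt.mp hpB))

theorem Nat.card_divisors_le_mul_rpow {ε : ℝ} (hε : 0 < ε) :
    ∃ C : ℝ, 0 < C ∧ ∀ n : ℕ, (#n.divisors : ℝ) ≤ C * (n : ℝ) ^ ε := by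
  set K : ℝ := 2 ^ ε / (2 ^ ε - 1)
  have hK : 1 ≤ K := by
    have : (1 : ℝ) < 2 ^ ε := Real.one_lt_rpow (by norm_num) hε
    rw [le_div_iff₀ (by linarith)]; linarith
  set B : ℕ := ⌈(2 : ℝ) ^ ε⁻¹⌉₊
  refine ⟨K ^ B, by positivity, fun n => ?_⟩
  rcases eq_or_ne n 0 with rfl | hn
  · simp [Real.zero_rpow hε.ne']
  have hsmall : ∏ p ∈ n.primeFactors, (if p < B then K else 1) ≤ K ^ B := by
    rw [← prod_filter, prod_const]
    refine pow_le_pow_right₀ hK ((card_le_card fun p hp => ?_).trans (card_range B).le)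
    simpa using (mem_filter.mp hp).2
  have hprod : ∏ p ∈ n.primeFactors, ((p : ℝ) ^ n.factorization p) ^ ε = (n : ℝ) ^ ε := by
    rw [Real.finsetProd_rpow _ _ (fun p _ => by positivity)]
    conv_rhs => rw [Nat.prod_primeFactors_pow_factorization hn]
    push_cast; rfl
  calc (#n.divisors : ℝ) = ∏ p ∈ n.primeFactors, ((n.factorization p : ℝ) + 1) := by
        rw [Nat.card_divisors hn]; push_cast; rfl
    _ ≤ ∏ p ∈ n.primeFactors,
          (if p < B then K else 1) * ((p : ℝ) ^ n.factorization p) ^ ε :=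
        prod_le_prod (fun _ _ => by positivity) fun p hp =>
          add_one_le_mul_rpow_pow hε (Nat.prime_of_mem_primeFactors hp).two_le _
    _ ≤ K ^ B * (n : ℝ) ^ ε := by
        rw [prod_mul_distrib, hprod]
        gcongr

theorem Int.card_divisors (z : ℤ) : #z.divisors = 2 * #z.natAbs.divisors := by
  rw [Int.divisors, card_disjUnion, card_map, card_map, two_mul]

theorem Int.card_divisors_le_mul_rpow {ε : ℝ} (hε : 0 < ε) :
    ∃ C : ℝ, 0 < C ∧ ∀ t : ℤ, (#t.divisors : ℝ) ≤ C * |(t : ℝ)| ^ ε := by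
  obtain ⟨C, hC, hdiv⟩ := Nat.card_divisors_le_mul_rpow hε
  refine ⟨2 * C, by positivity, fun t => ?_⟩
  rw [Int.card_divisors, Nat.cast_mul, Nat.cast_two, mul_assoc, ← Int.cast_abs, ← Nat.cast_natAbs]
  gcongr
  exact hdiv _

lemma card_filter_sq_sub_sq_dvd_le (s : Finset (ℕ × ℕ)) {t : ℤ} (ht : t ≠ 0) :
    #(s.filter fun y => (y.1 : ℤ) ^ 2 - (y.2 : ℤ) ^ 2 ∣ t) ≤ #t.divisors ^ 2 := by
  rw [sq, ← card_product]
  refine card_le_card_of_injOn (fun y => ((y.1 : ℤ) - y.2, (y.1 : ℤ) + y.2)) ?_ ?_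
  · intro y hy
    have hdvd := (mem_filter.mp hy).2
    rw [sq_sub_sq] at hdvd
    simp only [coe_product, Set.mem_prod, mem_coe, Int.mem_divisors]
    exact ⟨⟨dvd_of_mul_left_dvd hdvd, ht⟩, dvd_of_mul_right_dvd hdvd, ht⟩
  · intro y _ y' _ h
    simp only [Prod.mk.injEq] at h
    ext <;> omega

lemma Int.eq_of_ediv_eq_of_dvd_sub {q x y : ℤ} (h : x / q = y / q) (hd : q ∣ x - y) : x = y := by
  have hmod : y % q = x % q := Int.modEq_iff_dvd.mpr hd
  rw [← Int.mul_ediv_add_emod x q, ← Int.mul_ediv_add_emod y q, h, hmod]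

lemma abs_sub_mul_round_div_eq (n : ℤ) {q : ℕ} (hq : 0 < q) :
    |((n - q * round ((n : ℝ) / q) : ℤ) : ℝ)| = q * ndist (n / q) := by
  have hq' : (0 : ℝ) < q := by exact_mod_cast hq
  rw [ndist, ← abs_of_pos hq', ← abs_mul, abs_of_pos hq']
  push_cast
  congr 1
  field_simp

noncomputable def nearIntegerMultiples (a : ℤ) (q M : ℕ) (δ : ℝ) : Finset ℤ :=
  (Icc (-(M : ℤ)) M).filter fun t => t ≠ 0 ∧ ndist (a * t / q) < δ

lemma card_nearIntegerMultiples_le_card_product {q : ℕ} (hq : 0 < q) {a : ℤ}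
    (ha : IsCoprime a q) (M : ℕ) (δ : ℝ) :
    #(nearIntegerMultiples a q M δ) ≤
      #(Icc 0 (2 * M / q : ℤ) ×ˢ Icc (-⌊(q : ℝ) * δ⌋) ⌊(q : ℝ) * δ⌋) := by
  refine card_le_card_of_injOn
    (fun t => ((t + M) / q, a * t - q * round (((a * t : ℤ) : ℝ) / q))) ?_ ?_
  · intro t ht
    obtain ⟨ht, -, hnd⟩ := mem_filter.mp ht
    obtain ⟨htl, htu⟩ := mem_Icc.mp ht
    simp only [coe_product, Set.mem_prod, mem_coe, mem_Icc]
    refine ⟨⟨Int.ediv_nonneg (by omega) (by positivity),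
      Int.ediv_le_ediv (by positivity) (by omega)⟩, abs_le.mp (Int.le_floor.mpr ?_)⟩
    rw [Int.cast_abs, abs_sub_mul_round_div_eq _ hq]
    push_cast
    exact (mul_lt_mul_of_pos_left hnd (by positivity)).le
  · intro t _ t' _ h
    simp only [Prod.mk.injEq] at h
    refine add_right_cancel (Int.eq_of_ediv_eq_of_dvd_sub h.1 ?_)
    rw [add_sub_add_right_eq_sub]
    refine ha.symm.dvd_of_dvd_mul_left
      ⟨round (((a * t : ℤ) : ℝ) / q) - round (((a * t' : ℤ) : ℝ) / q), ?_⟩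
    linear_combination h.2

lemma card_nearIntegerMultiples_le {q : ℕ} (hq : 0 < q) {a : ℤ} (ha : IsCoprime a q) (M : ℕ)
    {δ : ℝ} (hδ : 0 ≤ δ) :
    (#(nearIntegerMultiples a q M δ) : ℝ) ≤ (2 * M / q + 1) * (2 * (q * δ) + 1) := by
  set K : ℤ := 2 * M / q
  set R : ℤ := ⌊(q : ℝ) * δ⌋
  have hK : 0 ≤ K := Int.ediv_nonneg (by positivity) (by positivity)
  have hR : 0 ≤ R := Int.floor_nonneg.mpr (by positivity)
  have hKq : (K : ℝ) * q ≤ 2 * M := by exact_mod_cast Int.ediv_mul_le (2 * M : ℤ) (by positivity)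
  have hRq : (R : ℝ) ≤ q * δ := Int.floor_le _
  calc _ ≤ (#(Icc 0 K ×ˢ Icc (-R) R) : ℝ) := by
        exact_mod_cast card_nearIntegerMultiples_le_card_product hq ha M δ
    _ = (K + 1) * (2 * R + 1) := by
        rw [card_product, Nat.cast_mul, ← Int.cast_natCast, Int.card_Icc_of_le 0 K (by omega),
          ← Int.cast_natCast, Int.card_Icc_of_le (-R) R (by omega)]
        push_cast
        ring
    _ ≤ (2 * M / q + 1) * (2 * (q * δ) + 1) := by
        gcongr
        rw [le_div_iff₀ (by positivity)]
        exact hKq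

lemma abs_sq_sub_sq_mul_le {Y W y₁ y₂ s : ℕ} (h₁ : Y ≤ y₁) (h₁' : y₁ < 2 * Y) (h₂ : Y ≤ y₂)
    (h₂' : y₂ < 2 * Y) (hs : s ≤ W) :
    |((y₁ : ℤ) ^ 2 - (y₂ : ℤ) ^ 2) * s| ≤ ((4 * W * Y ^ 2 : ℕ) : ℤ) := by
  have hd : |(y₁ : ℤ) ^ 2 - (y₂ : ℤ) ^ 2| ≤ 4 * Y ^ 2 := by
    rw [abs_le]; constructor <;> nlinarith
  have hs : |(s : ℤ)| ≤ W := by rw [abs_of_nonneg (by positivity)]; exact_mod_cast hs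
  rw [abs_mul]
  calc _ ≤ (4 * Y ^ 2 : ℤ) * W := mul_le_mul hd hs (abs_nonneg _) (by positivity)
    _ = _ := by push_cast; ring

lemma filter_subset_biUnion_nearIntegerMultiples (a : ℤ) (q W Y : ℕ) (δ : ℝ) :
    ((Ico Y (2 * Y) ×ˢ Ico Y (2 * Y)).filter fun p => p.1 ≠ p.2 ∧ ∃ s : ℕ, 1 ≤ s ∧ s ≤ W ∧
        ndist ((a : ℝ) * ((p.1 : ℝ) ^ 2 - (p.2 : ℝ) ^ 2) * s / q) < δ) ⊆
      (nearIntegerMultiples a q (4 * W * Y ^ 2) δ).biUnion fun t =>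
        (Ico Y (2 * Y) ×ˢ Ico Y (2 * Y)).filter fun y => (y.1 : ℤ) ^ 2 - (y.2 : ℤ) ^ 2 ∣ t := by
  intro y hy
  obtain ⟨hbox, hne, s, hs1, hsW, hnd⟩ := mem_filter.mp hy
  obtain ⟨⟨h₁, h₁'⟩, ⟨h₂, h₂'⟩⟩ : (Y ≤ y.1 ∧ y.1 < 2 * Y) ∧ (Y ≤ y.2 ∧ y.2 < 2 * Y) := by
    simpa using hbox
  have hd : (y.1 : ℤ) ^ 2 - (y.2 : ℤ) ^ 2 ≠ 0 :=
    sub_ne_zero.mpr (by exact_mod_cast (Nat.pow_left_injective two_ne_zero).ne hne)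
  refine mem_biUnion.mpr ⟨((y.1 : ℤ) ^ 2 - (y.2 : ℤ) ^ 2) * s, mem_filter.mpr
    ⟨mem_Icc.mpr (abs_le.mp (abs_sq_sub_sq_mul_le h₁ h₁' h₂ h₂' hsW)),
      mul_ne_zero hd (by positivity), ?_⟩, mem_filter.mpr ⟨hbox, dvd_mul_right _ _⟩⟩
  push_cast
  rwa [← mul_assoc]

lemma card_biUnion_filter_sq_sub_sq_dvd_le (s : Finset (ℕ × ℕ)) {T : Finset ℤ} (hT : 0 ∉ T)
    {D : ℝ} (hD : ∀ t ∈ T, (#t.divisors : ℝ) ≤ D) :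
    (#(T.biUnion fun t => s.filter fun y => (y.1 : ℤ) ^ 2 - (y.2 : ℤ) ^ 2 ∣ t) : ℝ) ≤
      #T * D ^ 2 := by
  calc _ ≤ ∑ t ∈ T, (#(s.filter fun y => (y.1 : ℤ) ^ 2 - (y.2 : ℤ) ^ 2 ∣ t) : ℝ) := by
        exact_mod_cast card_biUnion_le
    _ ≤ ∑ t ∈ T, (#t.divisors : ℝ) ^ 2 := sum_le_sum fun t ht => by
        exact_mod_cast card_filter_sq_sub_sq_dvd_le s (ne_of_mem_of_not_mem ht hT)
    _ ≤ #T * D ^ 2 := by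
        rw [← nsmul_eq_mul]
        exact sum_le_card_nsmul _ _ _ fun t ht => by gcongr; exact hD t ht

lemma four_mul_mul_sq_le_mul_pow_three {W Y : ℕ} (hW : 2 ≤ W) (hY : 2 ≤ Y) :
    4 * W * Y ^ 2 ≤ (W * Y) ^ 3 :=
  calc 4 * W * Y ^ 2 ≤ W ^ 2 * Y * (W * Y ^ 2) := by
        rw [mul_assoc]; gcongr; nlinarith
    _ = (W * Y) ^ 3 := by ring

theorem stmt_18 (η : ℝ) (hη : 0 < η) :
    ∃ C : ℝ, 0 < C ∧
      ∀ (q W X Y : ℕ) (a : ℤ), 2 ≤ q → 1 < W → 1 < X → 1 < Y →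
        IsCoprime a (q : ℤ) →
        ((((Finset.Ico Y (2 * Y) ×ˢ Finset.Ico Y (2 * Y)).filter fun p =>
            p.1 ≠ p.2 ∧ ∃ s : ℕ, 1 ≤ s ∧ s ≤ W ∧
              ndist ((a : ℝ) * ((p.1 : ℝ) ^ 2 - (p.2 : ℝ) ^ 2) * s / q) < 1 / X).card : ℝ)
          ≤ C * ((W : ℝ) * Y ^ 2 / q + 1) * (1 + (q : ℝ) / X) * ((W : ℝ) * Y) ^ η) := by
  obtain ⟨C, hC, hdiv⟩ := Int.card_divisors_le_mul_rpow (ε := η / 6) (by positivity)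
  refine ⟨16 * C ^ 2, by positivity, fun q W X Y a hq hW hX hY ha => ?_⟩
  set T := nearIntegerMultiples a q (4 * W * Y ^ 2) (1 / X)
  have hT : (#T : ℝ) ≤ 16 * ((W : ℝ) * Y ^ 2 / q + 1) * (1 + (q : ℝ) / X) := by
    have := card_nearIntegerMultiples_le (by omega) ha (4 * W * Y ^ 2) (δ := 1 / X) (by positivity)
    have hWY : (0 : ℝ) ≤ W * Y ^ 2 / q := by positivity
    have hqX : (0 : ℝ) ≤ q / X := by positivity
    calc _ ≤ _ := this
      _ = (8 * (W * Y ^ 2 / q) + 1) * (2 * (q / X) + 1) := by push_cast; ring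
      _ ≤ _ := by nlinarith
  have hdivT : ∀ t ∈ T, (#t.divisors : ℝ) ≤ C * ((W : ℝ) * Y) ^ (η / 2) := fun t ht => calc
    _ ≤ C * |(t : ℝ)| ^ (η / 6) := hdiv t
    _ ≤ C * (((W : ℝ) * Y) ^ 3) ^ (η / 6) := by
        have htM : |t| ≤ ((4 * W * Y ^ 2 : ℕ) : ℤ) := abs_le.mpr (mem_Icc.mp (mem_filter.mp ht).1)
        have hMWY := four_mul_mul_sq_le_mul_pow_three hW hY
        gcongr
        exact_mod_cast htM.trans (by exact_mod_cast hMWY)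
    _ = _ := by rw [← Real.rpow_natCast_mul (by positivity)]; ring_nf
  calc _ ≤ (#(T.biUnion fun t => (Ico Y (2 * Y) ×ˢ Ico Y (2 * Y)).filter fun y =>
          (y.1 : ℤ) ^ 2 - (y.2 : ℤ) ^ 2 ∣ t) : ℝ) := by
        exact Nat.cast_le.mpr (card_le_card (filter_subset_biUnion_nearIntegerMultiples a q W Y _))
    _ ≤ #T * (C * ((W : ℝ) * Y) ^ (η / 2)) ^ 2 :=
        card_biUnion_filter_sq_sub_sq_dvd_le _ (fun h => (mem_filter.mp h).2.1 rfl) hdivT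
    _ ≤ 16 * ((W : ℝ) * Y ^ 2 / q + 1) * (1 + (q : ℝ) / X) * (C * ((W : ℝ) * Y) ^ (η / 2)) ^ 2 := by
        gcongr
    _ = _ := by
        rw [mul_pow, ← Real.rpow_mul_natCast (by positivity)]
        ring_nf
end
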